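/- arXiv:2303.05673 — 2 statements merged into one kernel-verified Lean document; each statement's English description precedes it below -/
import Mathlib

section
/- Let G, H be finite non-redundant robustly rooted multigraphs with roots S_G, S_H respectively. If the unfolding trees T(G, S_G) and T(H, S_H) are almost isomorphic, then G and H are isomorphic as graphs. -/
/-- A directed multigraph: vertices, edges, origin and terminus maps. -/
structure Multigraph where
  V : Type
  E : Type
  o : E → V
  t : E → V

namespace Multigraph

/-- Graph homomorphism. -/
structure Hom (G H : Multigraph) where
  onV : G.V → H.V
  onE : G.E → H.E
  map_o : ∀ e, H.o (onE e) = onV (G.o e)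
  map_t : ∀ e, H.t (onE e) = onV (G.t e)

/-- Graph isomorphism. -/
structure Iso (G H : Multigraph) extends Hom G H where
  bijV : Function.Bijective onV
  bijE : Function.Bijective onE

/-- Rooted isomorphism of rooted multigraphs. -/
def RootedIso (G : Multigraph) (S : G.V) (H : Multigraph) (R : H.V) : Prop :=
  ∃ φ : Iso G H, φ.onV S = R

/-- Outgoing edge neighbourhood of a vertex. -/
def Eo (G : Multigraph) (v : G.V) : Set G.E := {e | G.o e = v}

/-- Incoming edge neighbourhood of a vertex. -/
def Et (G : Multigraph) (v : G.V) : Set G.E := {e | G.t e = v}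

/-- A graph equivalence relation: compatible equivalences on vertices and edges. -/
structure GraphEquiv (G : Multigraph) where
  rV : G.V → G.V → Prop
  rE : G.E → G.E → Prop
  equivV : Equivalence rV
  equivE : Equivalence rE
  compat_o : ∀ e f, rE e f → rV (G.o e) (G.o f)
  compat_t : ∀ e f, rE e f → rV (G.t e) (G.t f)

/-- Non-edge-collapsing graph equivalence relation. -/
def GraphEquiv.NonEdgeCollapsing {G : Multigraph} (s : GraphEquiv G) : Prop :=
  ∀ v v', s.rV v v' → ∀ e, G.o e = v → ∃! e', G.o e' = v' ∧ s.rE e e'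

/-- Quotient graph by a graph equivalence relation. -/
def GraphEquiv.quot {G : Multigraph} (s : GraphEquiv G) : Multigraph where
  V := Quot s.rV
  E := Quot s.rE
  o := Quot.lift (fun e => Quot.mk s.rV (G.o e)) (fun e f h => Quot.sound (s.compat_o e f h))
  t := Quot.lift (fun e => Quot.mk s.rV (G.t e)) (fun e f h => Quot.sound (s.compat_t e f h))

/-- A graph is non-redundant if its only non-edge-collapsing equivalence relation is trivial. -/
def NonRedundant (G : Multigraph) : Prop :=
  ∀ s : GraphEquiv G, s.NonEdgeCollapsing →
    (∀ v w, s.rV v w → v = w) ∧ (∀ e f, s.rE e f → e = f)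

/-- Directed walks in `G` starting at `S`, indexed by the terminus. -/
inductive Walk (G : Multigraph) (S : G.V) : G.V → Type
  | nil : Walk G S S
  | snoc {v : G.V} (w : Walk G S v) (e : G.E) (h : G.o e = v) : Walk G S (G.t e)

/-- Length of a walk. -/
def Walk.length {G : Multigraph} {S : G.V} : ∀ {v : G.V}, Walk G S v → ℕ
  | _, .nil => 0
  | _, .snoc w _ _ => w.length + 1

/-- Reachability by a directed walk. -/
def Reaches (G : Multigraph) (x y : G.V) : Prop := Nonempty (Walk G x y)

/-- `S` is a root: every vertex is reachable from `S`. -/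
def IsRoot (G : Multigraph) (S : G.V) : Prop := ∀ v, Reaches G S v

/-- No two edges share a terminus. -/
def NoClashes (G : Multigraph) : Prop := ∀ e f : G.E, G.t e = G.t f → e = f

/-- No non-empty closed walks. -/
def Acyclic (G : Multigraph) : Prop := ∀ v : G.V, ∀ w : Walk G v v, w.length = 0

/-- The outgoing subgraph `G_x`: induced on the vertices reachable from `x`. -/
def outGraph (G : Multigraph) (x : G.V) : Multigraph where
  V := {y : G.V // Reaches G x y}
  E := {e : G.E // Reaches G x (G.o e)}
  o := fun e => ⟨G.o e.1, e.2⟩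
  t := fun e => ⟨G.t e.1, e.2.elim fun w => ⟨w.snoc e.1 rfl⟩⟩

/-- The natural root of `G_x`. -/
def rootOut (G : Multigraph) (x : G.V) : (outGraph G x).V := ⟨x, ⟨Walk.nil⟩⟩

/-- o-equivalence of vertices: rooted isomorphism of their outgoing graphs. -/
def OEquiv (G : Multigraph) (v w : G.V) : Prop :=
  RootedIso (outGraph G v) (rootOut G v) (outGraph G w) (rootOut G w)

/-- Walks starting at `S` (with arbitrary terminus). -/
abbrev WalkFrom (G : Multigraph) (S : G.V) : Type := Σ v : G.V, Walk G S v

/-- Terminus of a walk. -/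
def term {G : Multigraph} {S : G.V} (w : WalkFrom G S) : G.V := w.1

/-- The unfolding tree `T(G, S)`: vertices are walks from `S`, edges are one-step extensions. -/
def unfoldTree (G : Multigraph) (S : G.V) : Multigraph where
  V := WalkFrom G S
  E := Σ v : G.V, Walk G S v × {e : G.E // G.o e = v}
  o := fun x => ⟨x.1, x.2.1⟩
  t := fun x => ⟨G.t x.2.2.1, x.2.1.snoc x.2.2.1 x.2.2.2⟩

/-- The empty walk at `S`, root of the unfolding tree. -/
def nilWalk (G : Multigraph) (S : G.V) : WalkFrom G S := ⟨S, Walk.nil⟩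

/-- Prefix order on walks from `S`. -/
inductive IsPrefix (G : Multigraph) (S : G.V) : WalkFrom G S → WalkFrom G S → Prop
  | refl (w : WalkFrom G S) : IsPrefix G S w w
  | snoc {w : WalkFrom G S} {v : G.V} (u : Walk G S v) (e : G.E) (h : G.o e = v) :
      IsPrefix G S w ⟨v, u⟩ → IsPrefix G S w ⟨G.t e, u.snoc e h⟩

/-- The half-tree of the unfolding tree rooted at the walk `w`. -/
def halfTree (G : Multigraph) (S : G.V) (w : WalkFrom G S) : Multigraph where
  V := {u : WalkFrom G S // IsPrefix G S w u}
  E := {x : Σ v : G.V, Walk G S v × {e : G.E // G.o e = v} // IsPrefix G S w ⟨x.1, x.2.1⟩}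
  o := fun x => ⟨⟨x.1.1, x.1.2.1⟩, x.2⟩
  t := fun x => ⟨⟨G.t x.1.2.2.1, x.1.2.1.snoc x.1.2.2.1 x.1.2.2.2⟩,
    IsPrefix.snoc x.1.2.1 x.1.2.2.1 x.1.2.2.2 x.2⟩

/-- A subspace of the unfolding tree: a set of walks closed under extension. -/
def IsSubspace (G : Multigraph) (S : G.V) (𝒮 : Set (WalkFrom G S)) : Prop :=
  ∀ w ∈ 𝒮, ∀ w', IsPrefix G S w w' → w' ∈ 𝒮

/-- An inescapable subspace: every walk extends into it. -/
def Inescapable (G : Multigraph) (S : G.V) (𝒮 : Set (WalkFrom G S)) : Prop :=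
  ∀ w : WalkFrom G S, ∃ u ∈ 𝒮, IsPrefix G S w u

/-- A cofinite subspace: a finite union of half-trees. -/
def CofiniteSubspace (G : Multigraph) (S : G.V) (𝒮 : Set (WalkFrom G S)) : Prop :=
  ∃ F : Set (WalkFrom G S), F.Finite ∧ 𝒮 = {u | ∃ x ∈ F, IsPrefix G S x u}

/-- `B` is a basis of the subspace `𝒮`: a prefix-antichain in `𝒮` such that every
walk in `𝒮` has a prefix in `B`. -/
def IsBasis (G : Multigraph) (S : G.V) (𝒮 B : Set (WalkFrom G S)) : Prop :=
  B ⊆ 𝒮 ∧ (∀ b ∈ B, ∀ b' ∈ B, IsPrefix G S b b' → b = b') ∧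
    ∀ w ∈ 𝒮, ∃ b ∈ B, IsPrefix G S b w

/-- Deleting a set of edges from a graph (also removing vertices all of whose
incident edges are deleted). -/
def deleteEdges (G : Multigraph) (F : Set G.E) : Multigraph where
  V := {v : G.V // ¬((∃ e, G.o e = v ∨ G.t e = v) ∧ ∀ e, (G.o e = v ∨ G.t e = v) → e ∈ F)}
  E := {e : G.E // e ∉ F}
  o := fun e => ⟨G.o e.1, fun h => e.2 (h.2 e.1 (Or.inl rfl))⟩
  t := fun e => ⟨G.t e.1, fun h => e.2 (h.2 e.1 (Or.inr rfl))⟩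

/-- Two trees are almost isomorphic: after removing finite subtrees (given by their
finite edge sets), the remainders are isomorphic. -/
def AlmostIso (T1 T2 : Multigraph) : Prop :=
  ∃ F1 : Set T1.E, F1.Finite ∧ ∃ F2 : Set T2.E, F2.Finite ∧
    Nonempty (Iso (deleteEdges T1 F1) (deleteEdges T2 F2))

open scoped Classical in
/-- The multiset of termini of the outgoing edges of `v`. -/
noncomputable def outSum (G : Multigraph) [Fintype G.E] (v : G.V) : Multiset G.V :=
  ∑ e ∈ Finset.univ.filter (fun e => G.o e = v), ({G.t e} : Multiset G.V)

/-- The defining relations of the graph monoid: `v = Σ_{e ∈ E_o(v)} t(e)` for non-sinks. -/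
def monoidRel (G : Multigraph) [Fintype G.E] : Multiset G.V → Multiset G.V → Prop :=
  fun s u => ∃ v : G.V, (∃ e, G.o e = v) ∧ s = {v} ∧ u = outSum G v

/-- Equality in the graph monoid `M(G)`: the additive congruence generated by the
graph relations on the free commutative monoid `Multiset G.V`. -/
def monoidEq (G : Multigraph) [Fintype G.E] (s u : Multiset G.V) : Prop :=
  addConGen (monoidRel G) s u

/-- A robustly rooted graph: it has a root, and every root has an out-neighbour that
is again a root. -/
def RobustlyRooted (G : Multigraph) : Prop :=
  (∃ S, IsRoot G S) ∧ ∀ v, IsRoot G v → ∃ e, G.o e = v ∧ IsRoot G (G.t e)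

/-- The two-vertex multigraph with adjacency matrix `(A B; C D)`;
`false` is the vertex `x`, `true` is the vertex `y`. -/
def twoVertexGraph (A B C D : ℕ) : Multigraph where
  V := Bool
  E := (Fin A ⊕ Fin B) ⊕ (Fin C ⊕ Fin D)
  o := fun e => match e with | .inl _ => false | .inr _ => true
  t := fun e => match e with
    | .inl (.inl _) => false
    | .inl (.inr _) => true
    | .inr (.inl _) => false
    | .inr (.inr _) => true

instance (A B C D : ℕ) : Fintype (twoVertexGraph A B C D).E :=
  inferInstanceAs (Fintype ((Fin A ⊕ Fin B) ⊕ (Fin C ⊕ Fin D)))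

end Multigraph

/-!
Call `v ∈ G` and `w ∈ H` equivalent when their rooted unfolding trees are isomorphic. Such an
isomorphism matches the outgoing edges of `v` and `w` bijectively with equivalent termini, so
in a non-redundant graph equivalent vertices are equal. An almost-isomorphism of `T(G, S_G)`
and `T(H, S_H)` removes only finitely many edges, all within bounded depth; following a walk
through roots of `G` (robust rootedness) beyond that depth, the isomorphism identifies the
unfolding tree of a root of `G` with one of `H`. Since every vertex is reachable from a root,
every vertex of `G` is equivalent to one of `H` and vice versa, and these correspondences on
vertices and outgoing edges assemble into an isomorphism `G ≅ H`.
-/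

namespace Multigraph

variable {G H K : Multigraph}

section Iso

def Iso.ofEquiv (eV : G.V ≃ H.V) (eE : G.E ≃ H.E)
    (map_o : ∀ e, H.o (eE e) = eV (G.o e)) (map_t : ∀ e, H.t (eE e) = eV (G.t e)) : Iso G H :=
  ⟨⟨eV, eE, map_o, map_t⟩, eV.bijective, eE.bijective⟩

noncomputable def Iso.equivV (φ : Iso G H) : G.V ≃ H.V := Equiv.ofBijective _ φ.bijV

noncomputable def Iso.equivE (φ : Iso G H) : G.E ≃ H.E := Equiv.ofBijective _ φ.bijE

def Iso.refl (G : Multigraph) : Iso G G :=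
  .ofEquiv (Equiv.refl _) (Equiv.refl _) (fun _ => rfl) (fun _ => rfl)

def Iso.trans (φ : Iso G H) (ψ : Iso H K) : Iso G K :=
  ⟨⟨ψ.onV ∘ φ.onV, ψ.onE ∘ φ.onE, fun e => by simp [ψ.map_o, φ.map_o],
    fun e => by simp [ψ.map_t, φ.map_t]⟩, ψ.bijV.comp φ.bijV, ψ.bijE.comp φ.bijE⟩

noncomputable def Iso.symm (φ : Iso G H) : Iso H G :=
  .ofEquiv φ.equivV.symm φ.equivE.symm
    (fun f => φ.equivV.eq_symm_apply.mpr
      (by simp [equivV, equivE, ← φ.map_o, Equiv.ofBijective_apply_symm_apply]))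
    (fun f => φ.equivV.eq_symm_apply.mpr
      (by simp [equivV, equivE, ← φ.map_t, Equiv.ofBijective_apply_symm_apply]))

@[simp] lemma Iso.symm_onV_onV (φ : Iso G H) (v : G.V) : φ.symm.onV (φ.onV v) = v :=
  φ.equivV.symm_apply_apply v

lemma RootedIso.refl (G : Multigraph) (S : G.V) : RootedIso G S G S := ⟨Iso.refl G, rfl⟩

lemma RootedIso.symm {S : G.V} {R : H.V} (h : RootedIso G S H R) : RootedIso H R G S := by
  obtain ⟨φ, rfl⟩ := h
  exact ⟨φ.symm, φ.symm_onV_onV S⟩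

lemma RootedIso.trans {S : G.V} {R : H.V} {Q : K.V} (h₁ : RootedIso G S H R)
    (h₂ : RootedIso H R K Q) : RootedIso G S K Q := by
  obtain ⟨φ, rfl⟩ := h₁
  obtain ⟨ψ, rfl⟩ := h₂
  exact ⟨φ.trans ψ, rfl⟩

noncomputable def Iso.outEdgeEquiv (φ : Iso G H) (v : G.V) :
    {e // G.o e = v} ≃ {f // H.o f = φ.onV v} :=
  φ.equivE.subtypeEquiv fun e => by
    rw [equivE, Equiv.ofBijective_apply, φ.map_o, φ.bijV.1.eq_iff]

end Iso

section Reaches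

lemma Hom.reaches (φ : Hom G H) {a b : G.V} (h : Reaches G a b) :
    Reaches H (φ.onV a) (φ.onV b) := by
  obtain ⟨w⟩ := h
  induction w with
  | nil => exact ⟨.nil⟩
  | snoc _ e he ih =>
    obtain ⟨w'⟩ := ih
    rw [← φ.map_t]
    exact ⟨w'.snoc (φ.onE e) (by rw [φ.map_o, he])⟩

lemma Iso.reaches_iff (φ : Iso G H) {a b : G.V} :
    Reaches H (φ.onV a) (φ.onV b) ↔ Reaches G a b :=
  ⟨fun h => by simpa using φ.symm.toHom.reaches h, φ.toHom.reaches⟩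

lemma Iso.rootedIso_outGraph (φ : Iso G H) (x : G.V) :
    RootedIso (outGraph G x) (rootOut G x) (outGraph H (φ.onV x)) (rootOut H (φ.onV x)) :=
  ⟨.ofEquiv (φ.equivV.subtypeEquiv fun _ => φ.reaches_iff.symm)
    (φ.equivE.subtypeEquiv fun e => by
      rw [equivE, Equiv.ofBijective_apply, φ.map_o]; exact φ.reaches_iff.symm)
    (fun e => Subtype.ext (φ.map_o e.1)) (fun e => Subtype.ext (φ.map_t e.1)), rfl⟩

end Reaches

section Unfolding

def Walk.append {S v : G.V} (w : Walk G S v) : ∀ {x : G.V}, Walk G v x → Walk G S x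
  | _, .nil => w
  | _, .snoc u e h => .snoc (w.append u) e h

/-- The edges of a walk, most recent first. -/
def Walk.edgeList {S : G.V} : ∀ {v : G.V}, Walk G S v → List G.E
  | _, .nil => []
  | _, .snoc w e _ => e :: w.edgeList

lemma Walk.edgeList_append {S v : G.V} (w : Walk G S v) :
    ∀ {x : G.V} (u : Walk G v x), (w.append u).edgeList = u.edgeList ++ w.edgeList
  | _, .nil => rfl
  | _, .snoc u e _ => by simp [Walk.append, Walk.edgeList, w.edgeList_append u]

lemma Walk.sigma_eq_of_edgeList_eq {S : G.V} :
    ∀ {v v' : G.V} (w : Walk G S v) (w' : Walk G S v'), w.edgeList = w'.edgeList →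
      (⟨v, w⟩ : WalkFrom G S) = ⟨v', w'⟩
  | _, _, .nil, .nil, _ => rfl
  | _, _, .nil, .snoc _ _ _, h => by simp [Walk.edgeList] at h
  | _, _, .snoc _ _ _, .nil, h => by simp [Walk.edgeList] at h
  | _, _, .snoc w e _, .snoc w' e' _, h => by
      obtain ⟨rfl, hw⟩ := List.cons.inj h
      cases Walk.sigma_eq_of_edgeList_eq w w' hw
      rfl

def WalkFrom.extend {S : G.V} (w : WalkFrom G S) (u : WalkFrom G w.1) : WalkFrom G S :=
  ⟨u.1, w.2.append u.2⟩

lemma WalkFrom.extend_injective {S : G.V} (w : WalkFrom G S) : Function.Injective w.extend := by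
  rintro ⟨v, u⟩ ⟨v', u'⟩ h
  apply Walk.sigma_eq_of_edgeList_eq
  have := congrArg (fun x : WalkFrom G S => x.2.edgeList) h
  simpa [WalkFrom.extend, Walk.edgeList_append] using this

lemma WalkFrom.reaches_extend {S : G.V} (w : WalkFrom G S) (u : WalkFrom G w.1) :
    Reaches (unfoldTree G S) w (w.extend u) := by
  obtain ⟨v, u⟩ := u
  induction u with
  | nil => exact ⟨.nil⟩
  | snoc u e h ih =>
    obtain ⟨p⟩ := ih
    exact ⟨p.snoc ⟨_, (w.2.append u, ⟨e, h⟩)⟩ rfl⟩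

lemma WalkFrom.exists_extend_eq {S : G.V} {w : WalkFrom G S} {y : (unfoldTree G S).V}
    (h : Reaches (unfoldTree G S) w y) : ∃ u : WalkFrom G w.1, w.extend u = y := by
  obtain ⟨p⟩ := h
  induction p with
  | nil => exact ⟨⟨w.1, .nil⟩, rfl⟩
  | snoc _ ε h ih =>
    obtain ⟨⟨v, u⟩, hu⟩ := ih
    obtain ⟨v', u', e, he⟩ := ε
    cases hu.trans h.symm
    exact ⟨⟨G.t e, u.snoc e he⟩, rfl⟩

lemma unfoldTree_edge_ext {S : G.V} {ε ε' : (unfoldTree G S).E}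
    (ho : (unfoldTree G S).o ε = (unfoldTree G S).o ε') (he : ε.2.2.1 = ε'.2.2.1) :
    ε = ε' := by
  obtain ⟨v, w, e, hv⟩ := ε
  obtain ⟨v', w', e', hv'⟩ := ε'
  cases ho
  cases he
  rfl

lemma unfoldTree_length_t {S : G.V} (ε : (unfoldTree G S).E) :
    ((unfoldTree G S).t ε).2.length = ((unfoldTree G S).o ε).2.length + 1 := rfl

lemma unfoldTree_length_le_of_reaches {S : G.V} {x y : (unfoldTree G S).V}
    (h : Reaches (unfoldTree G S) x y) : x.2.length ≤ y.2.length := by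
  obtain ⟨p⟩ := h
  induction p with
  | nil => exact le_rfl
  | snoc _ ε h ih =>
    rw [unfoldTree_length_t, h]
    omega

noncomputable def rerootIso {S : G.V} (w : WalkFrom G S) :
    Iso (unfoldTree G w.1) (outGraph (unfoldTree G S) w) where
  onV u := ⟨w.extend u, w.reaches_extend u⟩
  onE ε := ⟨⟨ε.1, (w.2.append ε.2.1, ε.2.2)⟩, w.reaches_extend ⟨ε.1, ε.2.1⟩⟩
  map_o _ := rfl
  map_t _ := rfl
  bijV := by
    refine ⟨fun u u' h => w.extend_injective (congrArg Subtype.val h), ?_⟩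
    rintro ⟨y, hy⟩
    obtain ⟨u, rfl⟩ := WalkFrom.exists_extend_eq hy
    exact ⟨u, rfl⟩
  bijE := by
    refine ⟨fun ε ε' h => unfoldTree_edge_ext (w.extend_injective ?_) ?_, ?_⟩
    · exact congrArg (fun ε => (unfoldTree G S).o ε.1) h
    · exact congrArg (fun ε => ε.1.2.2.1) h
    rintro ⟨⟨v, u, e, he⟩, hε⟩
    obtain ⟨⟨v', u'⟩, hu⟩ := WalkFrom.exists_extend_eq hε
    cases hu
    exact ⟨⟨_, (u', ⟨e, he⟩)⟩, rfl⟩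

lemma rootedIso_unfoldTree_outGraph {S : G.V} (w : WalkFrom G S) :
    RootedIso (unfoldTree G w.1) (nilWalk G w.1) (outGraph (unfoldTree G S) w)
      (rootOut (unfoldTree G S) w) :=
  ⟨rerootIso w, rfl⟩

end Unfolding

section UnfoldIso

def UnfoldIso (G : Multigraph) (v : G.V) (H : Multigraph) (w : H.V) : Prop :=
  RootedIso (unfoldTree G v) (nilWalk G v) (unfoldTree H w) (nilWalk H w)

lemma UnfoldIso.refl (G : Multigraph) (v : G.V) : UnfoldIso G v G v := RootedIso.refl _ _

lemma UnfoldIso.symm {v : G.V} {w : H.V} (h : UnfoldIso G v H w) : UnfoldIso H w G v :=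
  RootedIso.symm h

lemma UnfoldIso.trans {v : G.V} {w : H.V} {u : K.V} (h : UnfoldIso G v H w)
    (h' : UnfoldIso H w K u) : UnfoldIso G v K u :=
  RootedIso.trans h h'

def UnfoldIso.setoid (G : Multigraph) : Setoid G.V :=
  ⟨fun v w => UnfoldIso G v G w, ⟨UnfoldIso.refl G, UnfoldIso.symm, UnfoldIso.trans⟩⟩

lemma Iso.unfoldIso_onV {a : G.V} {b : H.V} (Φ : Iso (unfoldTree G a) (unfoldTree H b))
    (x : WalkFrom G a) : UnfoldIso G x.1 H (Φ.onV x).1 :=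
  (rootedIso_unfoldTree_outGraph x).trans
    ((Φ.rootedIso_outGraph x).trans (rootedIso_unfoldTree_outGraph (Φ.onV x)).symm)

lemma UnfoldIso.exists_of_reaches {v v' : G.V} {w : H.V} (h : UnfoldIso G v H w)
    (hv : Reaches G v v') : ∃ w', UnfoldIso G v' H w' := by
  obtain ⟨Φ, -⟩ := h
  obtain ⟨p⟩ := hv
  exact ⟨_, Φ.unfoldIso_onV ⟨v', p⟩⟩

def nilOutEquiv (G : Multigraph) (a : G.V) :
    {ε : (unfoldTree G a).E // (unfoldTree G a).o ε = nilWalk G a} ≃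
      {e : G.E // G.o e = a} where
  toFun ε := ⟨ε.1.2.2.1, ε.1.2.2.2.trans (congrArg Sigma.fst ε.2)⟩
  invFun e := ⟨⟨a, (.nil, e)⟩, rfl⟩
  left_inv ε := Subtype.ext (unfoldTree_edge_ext ε.2.symm rfl)
  right_inv _ := rfl

lemma UnfoldIso.exists_outEdgeEquiv {a : G.V} {b : H.V} (h : UnfoldIso G a H b) :
    ∃ σ : {e // G.o e = a} ≃ {f // H.o f = b},
      ∀ e, UnfoldIso G (G.t e.1) H (H.t (σ e).1) := by
  obtain ⟨Φ, hΦ⟩ := h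
  refine ⟨(nilOutEquiv G a).symm.trans ((Φ.outEdgeEquiv _).trans
    ((Equiv.subtypeEquivRight fun _ => by rw [hΦ]).trans (nilOutEquiv H b))), fun e => ?_⟩
  have h := Φ.unfoldIso_onV ((unfoldTree G a).t ⟨a, (.nil, e)⟩)
  rwa [← Φ.map_t ⟨a, (.nil, e)⟩] at h

end UnfoldIso

section NonRedundant

lemma NonRedundant.eq_of_rel (hG : NonRedundant G) (r : Setoid G.V)
    (hr : ∀ v w, r v w → ∃ σ : {e // G.o e = v} ≃ {e // G.o e = w},
      ∀ e, r (G.t e.1) (G.t (σ e).1))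
    {v w : G.V} (hvw : r v w) : v = w := by
  -- Transport every edge to the matching edge at a fixed representative of its origin's class;
  -- edges with the same image form a non-edge-collapsing equivalence.
  let rep : G.V → G.V := fun v => (Quotient.mk r v).out
  have rep_eq : ∀ {v w}, r v w → rep v = rep w :=
    fun h => congrArg Quotient.out (Quotient.sound h)
  choose σ hσ using fun v => hr _ v (Quotient.mk_out v)
  let m : G.E → G.E := fun e => ((σ (G.o e)).symm ⟨e, rfl⟩).1
  have m_eq : ∀ v (e : {e // G.o e = v}), m e.1 = ((σ v).symm e).1 := by
    rintro v ⟨e, rfl⟩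
    rfl
  have m_o : ∀ e, G.o (m e) = rep (G.o e) := fun e => ((σ _).symm _).2
  have m_t : ∀ e, r (G.t (m e)) (G.t e) := fun e => by
    simpa using hσ (G.o e) ((σ (G.o e)).symm ⟨e, rfl⟩)
  let s : GraphEquiv G :=
    { rV := r, rE := fun e f => m e = m f, equivV := r.iseqv, equivE := (Setoid.ker m).iseqv
      compat_o := fun e f h =>
        Quotient.exact (Quotient.out_inj.mp ((m_o e).symm.trans (h ▸ m_o f)))
      compat_t := fun e f h => r.trans (r.symm (m_t e)) (h ▸ m_t f) }
  have hs : s.NonEdgeCollapsing := by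
    intro v v' hv e he
    have hme : G.o (m e) = rep v' := by rw [m_o, he, rep_eq hv]
    refine ⟨(σ v' ⟨m e, hme⟩).1, ⟨(σ v' _).2, ?_⟩, ?_⟩
    · simp only [s, m_eq v' (σ v' _), Equiv.symm_apply_apply]
    · rintro e' ⟨he', hee'⟩
      have : (σ v').symm ⟨e', he'⟩ = ⟨m e, hme⟩ :=
        Subtype.ext ((m_eq v' ⟨e', he'⟩).symm.trans hee'.symm)
      rw [← this, Equiv.apply_symm_apply]
  exact (hG s hs).1 v w hvw

lemma NonRedundant.eq_of_unfoldIso (hG : NonRedundant G) {v w : G.V} (h : UnfoldIso G v G w) :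
    v = w :=
  hG.eq_of_rel (UnfoldIso.setoid G) (fun _ _ h => h.exists_outEdgeEquiv) h

end NonRedundant

section IsoOfUnfoldIso

def Iso.ofOutEdgeEquiv (ψ : G.V ≃ H.V) (σ : ∀ v, {e // G.o e = v} ≃ {f // H.o f = ψ v})
    (hσ : ∀ v e, H.t (σ v e).1 = ψ (G.t e.1)) : Iso G H :=
  .ofEquiv ψ ((Equiv.sigmaFiberEquiv G.o).symm.trans
      ((Equiv.sigmaCongr ψ σ).trans (Equiv.sigmaFiberEquiv H.o)))
    (fun e => (σ (G.o e) ⟨e, rfl⟩).2) (fun e => hσ (G.o e) ⟨e, rfl⟩)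

lemma nonempty_iso_of_unfoldIso (hG : NonRedundant G) (hH : NonRedundant H)
    (hGH : ∀ v, ∃ w, UnfoldIso G v H w) (hHG : ∀ w, ∃ v, UnfoldIso G v H w) :
    Nonempty (Iso G H) := by
  choose ψ hψ using hGH
  have ψ_bij : Function.Bijective ψ := by
    refine ⟨fun v v' h => hG.eq_of_unfoldIso ((hψ v).trans (h ▸ (hψ v').symm)), fun w => ?_⟩
    obtain ⟨v, hv⟩ := hHG w
    exact ⟨v, hH.eq_of_unfoldIso ((hψ v).symm.trans hv)⟩
  choose σ hσ using fun v => (hψ v).exists_outEdgeEquiv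
  exact ⟨.ofOutEdgeEquiv (.ofBijective ψ ψ_bij) σ
    fun v e => hH.eq_of_unfoldIso ((hσ v e).symm.trans (hψ _))⟩

end IsoOfUnfoldIso

section DeleteEdges

variable {T : Multigraph} {F : Set T.E}

def deleteEdgesHom (T : Multigraph) (F : Set T.E) : Hom (deleteEdges T F) T :=
  ⟨Subtype.val, Subtype.val, fun _ => rfl, fun _ => rfl⟩

lemma deleteEdges_exists_reaches (x : (deleteEdges T F).V)
    (hF : ∀ e, Reaches T x.1 (T.o e) → e ∉ F) {y : T.V} (p : Walk T x.1 y) :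
    ∃ y' : (deleteEdges T F).V, y'.1 = y ∧ Reaches (deleteEdges T F) x y' := by
  induction p with
  | nil => exact ⟨x, rfl, ⟨.nil⟩⟩
  | snoc p e he ih =>
    obtain ⟨y', rfl, ⟨q⟩⟩ := ih
    have heF : e ∉ F := hF e (he ▸ ⟨p⟩)
    exact ⟨(deleteEdges T F).t ⟨e, heF⟩, rfl, ⟨q.snoc ⟨e, heF⟩ (Subtype.ext he)⟩⟩

lemma rootedIso_outGraph_deleteEdges (x : (deleteEdges T F).V)
    (hF : ∀ e, Reaches T x.1 (T.o e) → e ∉ F) :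
    RootedIso (outGraph (deleteEdges T F) x) (rootOut _ x) (outGraph T x.1) (rootOut T x.1) := by
  let ι := deleteEdgesHom T F
  refine ⟨⟨⟨fun y => ⟨y.1.1, ι.reaches y.2⟩, fun e => ⟨e.1.1, ι.reaches e.2⟩,
    fun _ => rfl, fun _ => rfl⟩, ⟨?_, ?_⟩, ⟨?_, ?_⟩⟩, rfl⟩
  · exact fun y y' h => Subtype.ext (Subtype.ext (congrArg Subtype.val h :))
  · rintro ⟨y, ⟨p⟩⟩
    obtain ⟨y', rfl, hy'⟩ := deleteEdges_exists_reaches x hF p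
    exact ⟨⟨y', hy'⟩, rfl⟩
  · exact fun e e' h => Subtype.ext (Subtype.ext (congrArg Subtype.val h :))
  · rintro ⟨e, ⟨p⟩⟩
    have heF : e ∉ F := hF e ⟨p⟩
    obtain ⟨y', hy', hr⟩ := deleteEdges_exists_reaches x hF p
    have : (deleteEdges T F).o ⟨e, heF⟩ = y' := Subtype.ext hy'.symm
    exact ⟨⟨⟨e, heF⟩, this ▸ hr⟩, rfl⟩

end DeleteEdges

lemma _root_.Set.Finite.exists_forall_lt {α : Type*} {s : Set α} (hs : s.Finite)
    (f : α → ℕ) :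
    ∃ N, ∀ a ∈ s, f a < N := by
  obtain ⟨N, hN⟩ := (hs.image f).bddAbove
  exact ⟨N + 1, fun a ha => Nat.lt_succ_of_le (hN (Set.mem_image_of_mem f ha))⟩

section AlmostIso

variable {S : G.V} {F : Set (unfoldTree G S).E} {N : ℕ}

lemma deleteEdges_unfoldTree_length_t (ε : (deleteEdges (unfoldTree G S) F).E) :
    ((deleteEdges _ F).t ε).1.2.length = ((deleteEdges _ F).o ε).1.2.length + 1 := rfl

lemma rootedIso_outGraph_deleteEdges_unfoldTree
    (hF : ∀ ε ∈ F, ((unfoldTree G S).o ε).2.length < N)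
    (x : (deleteEdges (unfoldTree G S) F).V) (hx : N ≤ x.1.2.length) :
    RootedIso (outGraph (deleteEdges (unfoldTree G S) F) x) (rootOut _ x)
      (unfoldTree G x.1.1) (nilWalk G x.1.1) := by
  refine (rootedIso_outGraph_deleteEdges x fun ε hε hεF => ?_).trans
    (rootedIso_unfoldTree_outGraph x.1).symm
  have := unfoldTree_length_le_of_reaches hε
  have := hF ε hεF
  omega

lemma exists_walk_to_root_of_length (hrob : RobustlyRooted G) (hS : IsRoot G S) (n : ℕ) :
    ∃ x : WalkFrom G S, x.2.length = n ∧ IsRoot G x.1 := by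
  induction n with
  | zero => exact ⟨nilWalk G S, rfl, hS⟩
  | succ n ih =>
    obtain ⟨x, hx, hroot⟩ := ih
    obtain ⟨e, he, he_root⟩ := hrob.2 x.1 hroot
    exact ⟨(unfoldTree G S).t ⟨x.1, (x.2, ⟨e, he⟩)⟩, congrArg (· + 1) hx, he_root⟩

lemma exists_deleteEdges_edge_to_root (hrob : RobustlyRooted G)
    (hF : ∀ ε ∈ F, ((unfoldTree G S).o ε).2.length < N)
    (x : WalkFrom G S) (hx : IsRoot G x.1) (hN : N ≤ x.2.length) :
    ∃ ε : (deleteEdges (unfoldTree G S) F).E,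
      ((deleteEdges _ F).o ε).1 = x ∧ IsRoot G ((deleteEdges _ F).t ε).1.1 := by
  obtain ⟨e, he, he_root⟩ := hrob.2 x.1 hx
  have hεF : (⟨x.1, (x.2, ⟨e, he⟩)⟩ : (unfoldTree G S).E) ∉ F :=
    fun h => (hF _ h).not_ge hN
  exact ⟨⟨_, hεF⟩, rfl, he_root⟩

lemma exists_root_unfoldIso_of_iso_deleteEdges {R : H.V} {F₂ : Set (unfoldTree H R).E}
    (hrob : RobustlyRooted G) (hS : IsRoot G S) (hF : F.Finite) (hF₂ : F₂.Finite)
    (φ : Iso (deleteEdges (unfoldTree G S) F) (deleteEdges (unfoldTree H R) F₂)) :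
    ∃ v w, IsRoot G v ∧ UnfoldIso G v H w := by
  obtain ⟨N, hN⟩ := hF.exists_forall_lt fun ε => ((unfoldTree G S).o ε).2.length
  obtain ⟨K, hK⟩ := hF₂.exists_forall_lt fun ε => ((unfoldTree H R).o ε).2.length
  have key : ∀ i, ∃ x : (deleteEdges (unfoldTree G S) F).V,
      x.1.2.length = N + i ∧ IsRoot G x.1.1 ∧ i ≤ (φ.onV x).1.2.length := by
    -- `φ` carries the surviving edges along the walk to edges of `T(H, R)`, so depths grow
    -- by one per step on that side as well.
    intro i
    induction i with
    | zero =>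
      obtain ⟨x, hx, hroot⟩ := exists_walk_to_root_of_length hrob hS N
      obtain ⟨ε, rfl, -⟩ := exists_deleteEdges_edge_to_root hrob hN x hroot hx.ge
      exact ⟨_, hx, hroot, Nat.zero_le _⟩
    | succ i ih =>
      obtain ⟨x, hx, hroot, hφx⟩ := ih
      obtain ⟨ε, hε, hε_root⟩ := exists_deleteEdges_edge_to_root hrob hN x.1 hroot (by omega)
      have hεo : (deleteEdges _ F).o ε = x := Subtype.ext hε
      have hεt : ((deleteEdges _ F).t ε).1.2.length = x.1.2.length + 1 :=
        hεo ▸ deleteEdges_unfoldTree_length_t ε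
      have hφεt : (φ.onV ((deleteEdges _ F).t ε)).1.2.length = (φ.onV x).1.2.length + 1 := by
        rw [← φ.map_t, ← hεo, ← φ.map_o]
        exact deleteEdges_unfoldTree_length_t _
      exact ⟨_, by omega, hε_root, by omega⟩
  obtain ⟨x, hx, hroot, hφx⟩ := key K
  have hG := rootedIso_outGraph_deleteEdges_unfoldTree hN x (by omega)
  have hH := rootedIso_outGraph_deleteEdges_unfoldTree hK (φ.onV x) hφx
  exact ⟨_, _, hroot, (hG.symm.trans (φ.rootedIso_outGraph x)).trans hH⟩

end AlmostIso

end Multigraph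

open Multigraph

theorem statement13_general (G H : Multigraph)
    (hGnr : NonRedundant G) (hHnr : NonRedundant H)
    (hGrob : RobustlyRooted G) (hHrob : RobustlyRooted H)
    (SG : G.V) (SH : H.V) (hSG : IsRoot G SG) (hSH : IsRoot H SH)
    (hAI : AlmostIso (unfoldTree G SG) (unfoldTree H SH)) :
    Nonempty (Iso G H) := by
  obtain ⟨F₁, hF₁, F₂, hF₂, ⟨φ⟩⟩ := hAI
  obtain ⟨v₁, w₁, hv₁, h₁⟩ :=
    exists_root_unfoldIso_of_iso_deleteEdges hGrob hSG hF₁ hF₂ φ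
  obtain ⟨w₂, v₂, hw₂, h₂⟩ :=
    exists_root_unfoldIso_of_iso_deleteEdges hHrob hSH hF₂ hF₁ φ.symm
  refine nonempty_iso_of_unfoldIso hGnr hHnr (fun v => h₁.exists_of_reaches (hv₁ v)) fun w => ?_
  obtain ⟨v, hv⟩ := h₂.exists_of_reaches (hw₂ w)
  exact ⟨v, hv.symm⟩

/-- Finite non-redundant robustly rooted multigraphs with almost isomorphic
unfolding trees are isomorphic. -/
theorem statement13 (G H : Multigraph)
    [Fintype G.V] [Fintype G.E] [Fintype H.V] [Fintype H.E]
    (hGnr : NonRedundant G) (hHnr : NonRedundant H)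
    (hGrob : RobustlyRooted G) (hHrob : RobustlyRooted H)
    (SG : G.V) (SH : H.V) (hSG : IsRoot G SG) (hSH : IsRoot H SH)
    (hAI : AlmostIso (unfoldTree G SG) (unfoldTree H SH)) :
    Nonempty (Iso G H) :=
  statement13_general G H hGnr hHnr hGrob hHrob SG SH hSG hSH hAI
end

section
/- For any finite multigraph G with root S, and any basis B of a cofinite inescapable subspace of the unfolding tree T(G, S), the equality S = Σ_{p ∈ B} T(p) holds in the graph monoid M(G), where T(p) denotes the terminus of the walk p. -/
open Multigraph

/-!
Write `B_w` for the elements of `B` extending the walk `w`. If no element of `B` lies strictly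
below `w` and `w ∉ B`, then some element of `B` extends `w` strictly, so `t(w)` is not a sink; its
defining relation rewrites `t(w)` as the sum of `t(w e)` over the out-edges `e`, while `B_w` is the
disjoint union of the `B_{w e}`. Induction on the height of `B` above `w` gives
`t(w) = Σ_{b ∈ B_w} t(b)` in `M(G)`, and the empty walk gives the theorem.
-/

theorem List.IsPrefix.eq_of_append_singleton {α : Type*} {l m : List α} {a b : α}
    (ha : l ++ [a] <+: m) (hb : l ++ [b] <+: m) : a = b := by
  rcases List.prefix_or_prefix_of_prefix ha hb with h | h <;> simp_all

namespace Multigraph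

variable {G : Multigraph} {S : G.V}

def Walk.edges : ∀ {v : G.V}, Walk G S v → List G.E
  | _, .nil => []
  | _, .snoc w e _ => w.edges ++ [e]

theorem Walk.sigma_eq_of_edges_eq :
    ∀ {v₁ : G.V} (w₁ : Walk G S v₁) {v₂ : G.V} (w₂ : Walk G S v₂),
      w₁.edges = w₂.edges → (⟨v₁, w₁⟩ : WalkFrom G S) = ⟨v₂, w₂⟩
  | _, .nil, _, .nil, _ => rfl
  | _, .nil, _, .snoc _ _ _, h => by simp [Walk.edges] at h
  | _, .snoc _ _ _, _, .nil, h => by simp [Walk.edges] at h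
  | _, .snoc w₁ e₁ _, _, .snoc w₂ e₂ _, h => by
    obtain ⟨hw, he⟩ := List.append_inj' h rfl
    cases List.singleton_inj.mp he
    cases sigma_eq_of_edges_eq w₁ w₂ hw
    rfl

namespace WalkFrom

def edges (w : WalkFrom G S) : List G.E := w.2.edges

def extend_s14 (w : WalkFrom G S) (e : G.E) (he : G.o e = w.1) : WalkFrom G S :=
  ⟨G.t e, w.2.snoc e he⟩

@[simp]
theorem edges_extend (w : WalkFrom G S) (e : G.E) (he : G.o e = w.1) :
    (w.extend_s14 e he).edges = w.edges ++ [e] :=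
  rfl

theorem edges_injective : Function.Injective (edges : WalkFrom G S → List G.E) :=
  fun x y h => Walk.sigma_eq_of_edges_eq x.2 y.2 h

end WalkFrom

open WalkFrom

theorem isPrefix_iff_edges {x y : WalkFrom G S} : IsPrefix G S x y ↔ x.edges <+: y.edges := by
  refine ⟨fun h => ?_, fun h => ?_⟩
  · induction h with
    | refl => exact List.prefix_rfl
    | snoc u e _ _ ih => exact ih.trans (List.prefix_append _ [e])
  · obtain ⟨v, y⟩ := y
    induction y with
    | nil =>
      exact Walk.sigma_eq_of_edges_eq x.2 .nil (List.eq_nil_of_prefix_nil h) ▸ IsPrefix.refl _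
    | snoc u e he ih =>
      rcases List.prefix_concat_iff.mp h with h | h
      · exact Walk.sigma_eq_of_edges_eq x.2 (u.snoc e he) h ▸ IsPrefix.refl _
      · exact IsPrefix.snoc u e he (ih h)

theorem IsPrefix.total_of_isPrefix {x y z : WalkFrom G S} (hx : IsPrefix G S x z)
    (hy : IsPrefix G S y z) : IsPrefix G S x y ∨ IsPrefix G S y x := by
  simpa only [isPrefix_iff_edges] using
    List.prefix_or_prefix_of_prefix (isPrefix_iff_edges.mp hx) (isPrefix_iff_edges.mp hy)

theorem nilWalk_isPrefix (w : WalkFrom G S) : IsPrefix G S (nilWalk G S) w :=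
  isPrefix_iff_edges.mpr List.nil_prefix

theorem eq_nilWalk_of_isPrefix {w : WalkFrom G S} (h : IsPrefix G S w (nilWalk G S)) :
    w = nilWalk G S :=
  edges_injective (List.eq_nil_of_prefix_nil (isPrefix_iff_edges.mp h))

theorem isPrefix_extend_iff {b w : WalkFrom G S} {e : G.E} {he : G.o e = w.1} :
    IsPrefix G S b (w.extend_s14 e he) ↔ b = w.extend_s14 e he ∨ IsPrefix G S b w := by
  rw [isPrefix_iff_edges, isPrefix_iff_edges, edges_extend, List.prefix_concat_iff,
    ← edges_extend w e he, edges_injective.eq_iff]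

theorem IsPrefix.exists_extend_of_ne {w b : WalkFrom G S} (h : IsPrefix G S w b) (hne : w ≠ b) :
    ∃ (e : G.E) (he : G.o e = w.1), IsPrefix G S (w.extend_s14 e he) b := by
  induction h with
  | refl => exact absurd rfl hne
  | snoc u e he _ ih =>
    by_cases hw : w = ⟨_, u⟩
    · subst hw
      exact ⟨e, he, IsPrefix.refl _⟩
    · obtain ⟨e', he', hp⟩ := ih hw
      exact ⟨e', he', IsPrefix.snoc u e he hp⟩

theorem isPrefix_iff_eq_or_exists_edges {w b : WalkFrom G S} :
    IsPrefix G S w b ↔ w = b ∨ ∃ e, G.o e = w.1 ∧ w.edges ++ [e] <+: b.edges := by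
  refine ⟨fun h => or_iff_not_imp_left.mpr fun hne => ?_, ?_⟩
  · obtain ⟨e, he, hb⟩ := h.exists_extend_of_ne hne
    exact ⟨e, he, isPrefix_iff_edges.mp hb⟩
  · rintro (rfl | ⟨e, -, he⟩)
    · exact IsPrefix.refl _
    · exact isPrefix_iff_edges.mpr ((List.prefix_append _ _).trans he)

open scoped Classical in
theorem filter_isPrefix_eq_singleton {B : Finset (WalkFrom G S)}
    (hanti : ∀ b ∈ B, ∀ b' ∈ B, IsPrefix G S b b' → b = b') {w : WalkFrom G S}
    (hw : w ∈ B) : {b ∈ B | IsPrefix G S w b} = {w} := by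
  ext b
  simp only [Finset.mem_filter, Finset.mem_singleton]
  refine ⟨fun ⟨hb, hwb⟩ => (hanti w hw b hb hwb).symm, ?_⟩
  rintro rfl
  exact ⟨hw, IsPrefix.refl _⟩

open scoped Classical in
theorem pairwiseDisjoint_filter_append_singleton_prefix (B : Finset (WalkFrom G S))
    (w : WalkFrom G S) (s : Set G.E) :
    s.PairwiseDisjoint fun e => {b ∈ B | w.edges ++ [e] <+: b.edges} :=
  fun _ _ _ _ hne => Finset.disjoint_left.mpr fun _ h₁ h₂ =>
    hne ((Finset.mem_filter.mp h₁).2.eq_of_append_singleton (Finset.mem_filter.mp h₂).2)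

section GraphMonoid

variable [Fintype G.E]

theorem monoidEq_outSum {v : G.V} {e : G.E} (he : G.o e = v) : monoidEq G {v} (outSum G v) :=
  AddConGen.Rel.of _ _ ⟨v, ⟨e, he⟩, rfl, rfl⟩

open scoped Classical

theorem filter_isPrefix_eq_biUnion (B : Finset (WalkFrom G S)) {w : WalkFrom G S} (hw : w ∉ B) :
    {b ∈ B | IsPrefix G S w b} =
      (Finset.univ.filter fun e => G.o e = w.1).biUnion
        fun e => {b ∈ B | w.edges ++ [e] <+: b.edges} := by
  ext b
  simp only [Finset.mem_filter, Finset.mem_biUnion, Finset.mem_univ, true_and,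
    isPrefix_iff_eq_or_exists_edges]
  constructor
  · rintro ⟨hb, rfl | ⟨e, he, hpre⟩⟩
    · exact absurd hb hw
    · exact ⟨e, he, hb, hpre⟩
  · rintro ⟨e, he, hb, hpre⟩
    exact ⟨hb, Or.inr ⟨e, he, hpre⟩⟩

theorem monoidEq_term_sum_filter_isPrefix {B : Finset (WalkFrom G S)}
    (hanti : ∀ b ∈ B, ∀ b' ∈ B, IsPrefix G S b b' → b = b')
    (hcomp : ∀ w : WalkFrom G S, ∃ b ∈ B, IsPrefix G S b w ∨ IsPrefix G S w b)
    (w : WalkFrom G S) (hw : ∀ b ∈ B, IsPrefix G S b w → b = w) :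
    monoidEq G {term w} (∑ b ∈ B with IsPrefix G S w b, {term b}) := by
  by_cases hwB : w ∈ B
  · rw [filter_isPrefix_eq_singleton hanti hwB, Finset.sum_singleton]
    exact (addConGen _).refl _
  obtain ⟨b₀, hb₀, hwb₀⟩ : ∃ b ∈ B, IsPrefix G S w b := by
    obtain ⟨b, hb, hbw | hwb⟩ := hcomp w
    · exact absurd (hw b hb hbw ▸ hb) hwB
    · exact ⟨b, hb, hwb⟩
  obtain ⟨e₀, he₀, hb₀'⟩ := hwb₀.exists_extend_of_ne (by rintro rfl; exact hwB hb₀)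
  -- used by `decreasing_by`
  have hlt : w.edges.length < B.sup fun b => b.edges.length :=
    calc w.edges.length < (w.extend_s14 e₀ he₀).edges.length := by simp
      _ ≤ b₀.edges.length := (isPrefix_iff_edges.mp hb₀').length_le
      _ ≤ _ := Finset.le_sup (f := fun b => b.edges.length) hb₀
  rw [filter_isPrefix_eq_biUnion B hwB,
    Finset.sum_biUnion (pairwiseDisjoint_filter_append_singleton_prefix B w _)]
  refine (addConGen _).trans (monoidEq_outSum he₀) ((addConGen _).finsetSum _ fun e he => ?_)
  have he : G.o e = w.1 := (Finset.mem_filter.mp he).2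
  have hrec := monoidEq_term_sum_filter_isPrefix hanti hcomp (w.extend_s14 e he) fun b hb hbw =>
    (isPrefix_extend_iff.mp hbw).resolve_right fun h => hwB (hw b hb h ▸ hb)
  simp only [isPrefix_iff_edges, edges_extend] at hrec
  exact hrec
termination_by (B.sup fun b => b.edges.length) - w.edges.length
decreasing_by simp only [edges_extend, List.length_append, List.length_singleton]; omega

end GraphMonoid

theorem IsBasis.exists_isPrefix_or_isPrefix {𝒮 B : Set (WalkFrom G S)} (hB : IsBasis G S 𝒮 B)
    (h𝒮 : Inescapable G S 𝒮) (w : WalkFrom G S) :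
    ∃ b ∈ B, IsPrefix G S b w ∨ IsPrefix G S w b := by
  obtain ⟨u, hu, hwu⟩ := h𝒮 w
  obtain ⟨b, hb, hbu⟩ := hB.2.2 u hu
  exact ⟨b, hb, hbu.total_of_isPrefix hwu⟩

end Multigraph

theorem statement14_general (G : Multigraph) [Fintype G.E]
    (S : G.V) (B : Finset (WalkFrom G S))
    (h : ∃ 𝒮 : Set (WalkFrom G S), IsSubspace G S 𝒮 ∧ Inescapable G S 𝒮 ∧
      CofiniteSubspace G S 𝒮 ∧ IsBasis G S 𝒮 ↑B) :
    monoidEq G {S} (∑ p ∈ B, ({term p} : Multiset G.V)) := by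
  classical
  obtain ⟨𝒮, -, h𝒮, -, hB⟩ := h
  have key := monoidEq_term_sum_filter_isPrefix hB.2.1 (hB.exists_isPrefix_or_isPrefix h𝒮)
    (nilWalk G S) fun b _ hb => eq_nilWalk_of_isPrefix hb
  simp only [Finset.filter_true_of_mem fun b _ => nilWalk_isPrefix b] at key
  exact key

/-- For any basis `B` of a cofinite inescapable subspace of `T(G,S)`,
`S = Σ_{p ∈ B} T(p)` in the graph monoid `M(G)`. -/
theorem statement14 (G : Multigraph) [Fintype G.V] [Fintype G.E]
    (S : G.V) (hS : IsRoot G S) (B : Finset (WalkFrom G S))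
    (h : ∃ 𝒮 : Set (WalkFrom G S), IsSubspace G S 𝒮 ∧ Inescapable G S 𝒮 ∧
      CofiniteSubspace G S 𝒮 ∧ IsBasis G S 𝒮 ↑B) :
    monoidEq G {S} (∑ p ∈ B, ({term p} : Multiset G.V)) :=
  statement14_general G S B h
end
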